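/- For every z ∈ (0, 1 + W₀(−2e^{−2})/2], one has z/(−ln(1−z)) ≥ 1/2. -/

import Mathlib

/-!
Write `s = 1 + W(-2e⁻²)/2`. The defining equation `W e^W = -2e⁻²` says exactly that
`e^{-2s} = 1 - s`, so the convex function `z ↦ e^{-2z}` meets the line `z ↦ 1 - z` at `0` and
at `s`, and lies below it in between. Taking logarithms, `-log (1 - z) ≤ 2z` on `(0, s]`.
-/

open Real

lemma exp_mul_le_one_add_mul_of_le {a b s z : ℝ} (hs : exp (a * s) ≤ 1 + b * s)
    (hz₀ : 0 ≤ z) (hzs : z ≤ s) : exp (a * z) ≤ 1 + b * z := by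
  rcases hz₀.eq_or_lt with rfl | hz_pos
  · simp
  have hs₀ : 0 < s := hz_pos.trans_le hzs
  have hθ₀ : 0 ≤ z / s := by positivity
  have hθ₁ : 0 ≤ 1 - z / s := sub_nonneg.2 ((div_le_one hs₀).2 hzs)
  have hconv := convexOn_exp.2 (Set.mem_univ (a * s)) (Set.mem_univ 0) hθ₀ hθ₁ (by ring)
  have hpoint : z / s * (a * s) + (1 - z / s) * 0 = a * z := by field_simp; ring
  simp only [smul_eq_mul, hpoint, exp_zero] at hconv
  calc exp (a * z) ≤ z / s * exp (a * s) + (1 - z / s) * 1 := hconv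
    _ ≤ z / s * (1 + b * s) + (1 - z / s) * 1 := by gcongr
    _ = 1 + b * z := by field_simp; ring

lemma half_le_div_neg_log_one_sub {z : ℝ} (hz : 0 < z) (hexp : exp (-2 * z) ≤ 1 - z) :
    1 / 2 ≤ z / -log (1 - z) := by
  have hlog : -log (1 - z) ≤ 2 * z := by
    have := log_le_log (exp_pos _) hexp
    rw [log_exp] at this
    linarith
  have hlog_pos : 0 < -log (1 - z) :=
    neg_pos.2 (log_neg ((exp_pos _).trans_le hexp) (by linarith))
  rw [le_div_iff₀ hlog_pos]
  linarith

lemma exp_neg_two_mul_eq_one_sub_of_mul_exp_eq {w : ℝ} (hw : w * exp w = -(2 * exp (-2))) :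
    exp (-2 * (1 + w / 2)) = 1 - (1 + w / 2) := by
  have hexp : exp w = -(2 * exp (-2)) / w := by
    have hw₀ : w ≠ 0 := by
      rintro rfl
      simp only [zero_mul, zero_eq_neg, mul_eq_zero, OfNat.ofNat_ne_zero, false_or] at hw
      exact (exp_pos _).ne' hw
    rw [eq_div_iff hw₀, mul_comm, hw]
  have hsplit : -2 * (1 + w / 2) = -2 + -w := by ring
  rw [hsplit, exp_add, exp_neg w, hexp]
  field_simp
  ring

lemma neg_inv_exp_one_le_neg_two_mul_exp_neg_two : -(1 / exp 1) ≤ -(2 * exp (-2)) := by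
  have h2 : (2 : ℝ) ≤ exp 1 := by linarith [add_one_le_exp (1 : ℝ)]
  have hsplit : 1 / exp 1 = exp 1 * exp (-2) := by
    rw [← exp_add, one_div, ← exp_neg]; norm_num
  rw [neg_le_neg_iff, hsplit]
  gcongr

theorem stmt_9_general (W : ℝ → ℝ)
    (hW : ∀ x : ℝ, -(1 / Real.exp 1) ≤ x → W x * Real.exp (W x) = x)
    (z : ℝ) (hz : z ∈ Set.Ioc (0:ℝ) (1 + W (-(2 * Real.exp (-2))) / 2)) :
    z / (-Real.log (1 - z)) ≥ 1 / 2 := by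
  have hs := exp_neg_two_mul_eq_one_sub_of_mul_exp_eq
    (hW _ neg_inv_exp_one_le_neg_two_mul_exp_neg_two)
  have hexp : exp (-2 * z) ≤ 1 - z := by
    simpa only [sub_eq_add_neg, neg_one_mul] using
      exp_mul_le_one_add_mul_of_le (b := -1) (by simpa [sub_eq_add_neg] using hs.le)
        hz.1.le hz.2
  exact half_le_div_neg_log_one_sub hz.1 hexp

/-- For every z ∈ (0, 1 + W₀(−2e^{−2})/2],
z/(−ln(1−z)) ≥ 1/2. -/
theorem stmt_9 (W : ℝ → ℝ)
    (hW : ∀ x : ℝ, -(1 / Real.exp 1) ≤ x → W x * Real.exp (W x) = x)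
    (hW' : ∀ x : ℝ, -(1 / Real.exp 1) ≤ x → -1 ≤ W x)
    (z : ℝ) (hz : z ∈ Set.Ioc (0:ℝ) (1 + W (-(2 * Real.exp (-2))) / 2)) :
    z / (-Real.log (1 - z)) ≥ 1 / 2 :=
  stmt_9_general W hW z hz
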